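/- Let N be a positive integer and let a : Fin N → Fin N → ℝ satisfy: a i j = a j i for all i, j; a i j ≤ 0 whenever i ≠ j; and ∑_{j} a i j = 0 for every i. Let u : Fin N → ℝ³ satisfy ‖u i‖ ≥ 1 for every i. Then ∑_{i,j} a i j · ⟨u i/‖u i‖, u j/‖u j‖⟩ ≤ ∑_{i,j} a i j · ⟨u i, u j⟩. -/
import Mathlib


open scoped RealInnerProductSpace

open Finset in
lemma bartels_quad_eq {N : ℕ} (a : Fin N → Fin N → ℝ)
    (hsymm : ∀ i j, a i j = a j i)
    (hrowsum : ∀ i, ∑ j, a i j = 0)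
    (w : Fin N → EuclideanSpace ℝ (Fin 3)) :
    ∑ i, ∑ j, a i j * ⟪w i, w j⟫ =
      -(1/2) * ∑ i, ∑ j, a i j * ‖w i - w j‖ ^ 2 := by
  have key : ∀ i j : Fin N, a i j * ⟪w i, w j⟫ =
      (a i j * ‖w i‖ ^ 2 + a i j * ‖w j‖ ^ 2 - a i j * ‖w i - w j‖ ^ 2) / 2 := by
    intro i j
    rw [norm_sub_sq_real]; ring
  have h1 : ∑ i, ∑ j, a i j * ‖w i‖ ^ 2 = 0 :=
    Finset.sum_eq_zero fun i _ => by rw [← Finset.sum_mul, hrowsum, zero_mul]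
  have h2 : ∑ i : Fin N, ∑ j, a i j * ‖w j‖ ^ 2 = 0 := by
    rw [Finset.sum_comm]
    refine Finset.sum_eq_zero fun j _ => ?_
    rw [← Finset.sum_mul]
    have hcol : ∑ i, a i j = 0 := by
      rw [Finset.sum_congr rfl fun i _ => hsymm i j]
      exact hrowsum j
    rw [hcol, zero_mul]
  calc ∑ i, ∑ j, a i j * ⟪w i, w j⟫
      = ∑ i, ∑ j, (a i j * ‖w i‖ ^ 2 + a i j * ‖w j‖ ^ 2 - a i j * ‖w i - w j‖ ^ 2) / 2 :=
        Finset.sum_congr rfl fun i _ => Finset.sum_congr rfl fun j _ => key i j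
    _ = ((∑ i, ∑ j, a i j * ‖w i‖ ^ 2) + (∑ i, ∑ j, a i j * ‖w j‖ ^ 2)
          - ∑ i, ∑ j, a i j * ‖w i - w j‖ ^ 2) / 2 := by
        simp only [← Finset.sum_div, Finset.sum_sub_distrib, Finset.sum_add_distrib]
    _ = -(1/2) * ∑ i, ∑ j, a i j * ‖w i - w j‖ ^ 2 := by
        rw [h1, h2]; ring

lemma bartels_lip {x y : EuclideanSpace ℝ (Fin 3)} (hx : 1 ≤ ‖x‖) (hy : 1 ≤ ‖y‖) :
    ‖‖x‖⁻¹ • x - ‖y‖⁻¹ • y‖ ^ 2 ≤ ‖x - y‖ ^ 2 := by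
  set A := ‖x‖
  set B := ‖y‖
  have hA : (0:ℝ) < A := lt_of_lt_of_le one_pos hx
  have hB : (0:ℝ) < B := lt_of_lt_of_le one_pos hy
  have ht : ⟪x, y⟫ ≤ A * B := real_inner_le_norm x y
  have e1 : ‖x - y‖ ^ 2 = A ^ 2 - 2 * ⟪x, y⟫ + B ^ 2 := norm_sub_sq_real x y
  have e2 : ‖‖x‖⁻¹ • x - ‖y‖⁻¹ • y‖ ^ 2
      = ‖‖x‖⁻¹ • x‖ ^ 2 - 2 * ⟪‖x‖⁻¹ • x, ‖y‖⁻¹ • y⟫ + ‖‖y‖⁻¹ • y‖ ^ 2 :=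
    norm_sub_sq_real _ _
  have nx : ‖‖x‖⁻¹ • x‖ = 1 := by
    rw [norm_smul, norm_inv, norm_norm, inv_mul_cancel₀ hA.ne']
  have ny : ‖‖y‖⁻¹ • y‖ = 1 := by
    rw [norm_smul, norm_inv, norm_norm, inv_mul_cancel₀ hB.ne']
  have e3 : ⟪‖x‖⁻¹ • x, ‖y‖⁻¹ • y⟫ = A⁻¹ * B⁻¹ * ⟪x, y⟫ := by
    rw [real_inner_smul_left, real_inner_smul_right]; ring
  rw [e1, e2, nx, ny, e3]
  have hAB : 1 ≤ A * B := by nlinarith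
  have hinv : A⁻¹ * B⁻¹ = (A * B)⁻¹ := (mul_inv A B).symm
  rw [hinv]
  have h1 : (A*B)⁻¹ ≤ 1 := inv_le_one_of_one_le₀ hAB
  have h2 : (0:ℝ) < A*B := mul_pos hA hB
  nlinarith [sq_nonneg (A - B), mul_le_mul_of_nonneg_left ht (sub_nonneg.mpr h1),
    inv_mul_cancel₀ h2.ne']

/-- Algebraic core of Bartels' Lemma 5.1 (lem:bar): for a symmetric matrix `a` with
nonpositive off-diagonal entries and zero row sums, and nodal vectors `u i ∈ ℝ³`
with `‖u i‖ ≥ 1`, the quadratic form does not increase under nodewise normalization. -/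
theorem bartels_normalization_inequality
    (N : ℕ) (hN : 0 < N) (a : Fin N → Fin N → ℝ)
    (hsymm : ∀ i j, a i j = a j i)
    (hoffdiag : ∀ i j, i ≠ j → a i j ≤ 0)
    (hrowsum : ∀ i, ∑ j, a i j = 0)
    (u : Fin N → EuclideanSpace ℝ (Fin 3))
    (hu : ∀ i, 1 ≤ ‖u i‖) :
    ∑ i, ∑ j, a i j * ⟪‖u i‖⁻¹ • u i, ‖u j‖⁻¹ • u j⟫
      ≤ ∑ i, ∑ j, a i j * ⟪u i, u j⟫ := by
  set v : Fin N → EuclideanSpace ℝ (Fin 3) := fun i => ‖u i‖⁻¹ • u i with hv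
  have hqv := bartels_quad_eq a hsymm hrowsum v
  have hqu := bartels_quad_eq a hsymm hrowsum u
  rw [show (∑ i, ∑ j, a i j * ⟪‖u i‖⁻¹ • u i, ‖u j‖⁻¹ • u j⟫)
      = ∑ i, ∑ j, a i j * ⟪v i, v j⟫ from rfl, hqv, hqu]
  have key : ∑ i, ∑ j, a i j * ‖u i - u j‖ ^ 2 ≤ ∑ i, ∑ j, a i j * ‖v i - v j‖ ^ 2 := by
    apply Finset.sum_le_sum
    intro i _
    apply Finset.sum_le_sum
    intro j _
    rcases eq_or_ne i j with rfl | hij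
    · simp
    · exact mul_le_mul_of_nonpos_left (bartels_lip (hu i) (hu j)) (hoffdiag i j hij)
  linarith
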